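/- arXiv:2010.08812 — 2 statements merged into one kernel-verified Lean document; each statement's English description precedes it below -/
import Mathlib

section
/- For every sequence {P_n : n ∈ ℕ} of perfect subsets of a perfect Polish space X, there exists a sequence {K_n : n ∈ ℕ} of pairwise disjoint Cantor sets with K_n ⊆ P_n for each n. -/
open Set

/-- An `Fσ` set: a countable union of closed sets. -/
def IsFsigma {X : Type*} [TopologicalSpace X] (F : Set X) : Prop :=
  ∃ s : ℕ → Set X, (∀ n, IsClosed (s n)) ∧ F = ⋃ n, s n

/-- A perfect set in the classical sense: nonempty, closed, without isolated points. -/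
def PerfectSet {X : Type*} [TopologicalSpace X] (P : Set X) : Prop :=
  Perfect P ∧ P.Nonempty

/-- A Cantor set: a subset homeomorphic to the Cantor space `2^ℕ`
(hence nonempty and compact). -/
def IsCantorSet {X : Type*} [TopologicalSpace X] (K : Set X) : Prop :=
  Nonempty ((ℕ → Bool) ≃ₜ K)

/-- `F` is meager relative to the subspace `P`. -/
def MeagerIn {X : Type*} [TopologicalSpace X] (F P : Set X) : Prop :=
  IsMeagre ((↑) ⁻¹' F : Set P)

/-- `A` is countably perfectly meager in `X`. -/
def CPM {X : Type*} [TopologicalSpace X] (A : Set X) : Prop :=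
  ∀ P : ℕ → Set X, (∀ n, PerfectSet (P n)) →
    ∃ F : Set X, IsFsigma F ∧ A ⊆ F ∧ ∀ n, MeagerIn F (P n)

/-!
Build the `K n` one at a time, keeping each of them closed and nowhere dense in every `P m`.
Then the finite union `C` of `K 0, …, K (n-1)` is closed and nowhere dense in `P n`, so `P n \ C`
is a nonempty relatively open subset of `P n` and contains a nonempty perfect set `Q`. Splitting
the Cantor space as a product `2^ℕ × 2^ℕ` gives continuum many pairwise disjoint Cantor sets
in `Q`; since each `P m` is separable, only countably many of them have nonempty interior in
some `P m`, and any other one can be taken as `K n`.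
-/

open Function Topology

instance Cardinal.uncountable_nat_bool : Uncountable (ℕ → Bool) := by
  rw [← Cardinal.aleph0_lt_mk_iff, ← Cardinal.power_def, Cardinal.mk_bool, Cardinal.mk_nat]
  exact Cardinal.cantor _

/-- Even coordinates go to the first factor, odd ones to the second. -/
def Homeomorph.natBoolProd : (ℕ → Bool) ≃ₜ (ℕ → Bool) × (ℕ → Bool) :=
  (Homeomorph.piCongrLeft Equiv.natSumNatEquivNat).symm.trans
    Homeomorph.sumArrowHomeomorphProdArrow

lemma isCantorSet_range {X : Type*} [TopologicalSpace X] [T2Space X] {f : (ℕ → Bool) → X}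
    (hc : Continuous f) (hi : Injective f) : IsCantorSet (range f) :=
  ⟨(hc.subtype_mk _).homeoOfEquivCompactToT2 (f := Equiv.ofInjective f hi)⟩

lemma IsCantorSet.isCompact {X : Type*} [TopologicalSpace X] {K : Set X} (hK : IsCantorSet K) :
    IsCompact K :=
  isCompact_iff_compactSpace.2 hK.some.compactSpace

lemma Perfect.exists_perfect_subset_inter_nhds {X : Type*} [TopologicalSpace X] [RegularSpace X]
    {P s : Set X} {x : X} (hP : Perfect P) (hx : x ∈ P) (hs : s ∈ 𝓝 x) :
    ∃ Q, Perfect Q ∧ Q.Nonempty ∧ Q ⊆ P ∩ s := by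
  obtain ⟨t, ht, htc, hts⟩ := exists_mem_nhds_isClosed_subset hs
  obtain ⟨hQ, hQne⟩ := hP.closure_nhds_inter x hx (mem_interior_iff_mem_nhds.2 ht) isOpen_interior
  have hQt : closure (interior t ∩ P) ⊆ P ∩ t :=
    closure_minimal (fun y ⟨hyt, hyP⟩ => ⟨hyP, interior_subset hyt⟩) (hP.closed.inter htc)
  exact ⟨_, hQ, hQne, hQt.trans (inter_subset_inter_right _ hts)⟩

lemma Perfect.exists_pairwise_disjoint_cantor {X : Type*} [MetricSpace X] [CompleteSpace X]
    {Q : Set X} (hQ : Perfect Q) (hne : Q.Nonempty) :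
    ∃ K : (ℕ → Bool) → Set X, Pairwise (Disjoint on K) ∧ ∀ t, IsCantorSet (K t) ∧ K t ⊆ Q := by
  obtain ⟨f, hfQ, hfc, hfi⟩ := hQ.exists_nat_bool_injection hne
  set g : (ℕ → Bool) × (ℕ → Bool) → X := f ∘ Homeomorph.natBoolProd.symm
  have hgi : Injective g := hfi.comp Homeomorph.natBoolProd.symm.injective
  refine ⟨fun t => range fun x => g (t, x), fun t t' htt' => ?_, fun t => ⟨?_, ?_⟩⟩
  · refine disjoint_left.2 ?_
    rintro _ ⟨x, rfl⟩ ⟨y, hy⟩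
    exact htt' (congrArg Prod.fst (hgi hy)).symm
  · exact isCantorSet_range ((hfc.comp Homeomorph.natBoolProd.symm.continuous).comp
      (Continuous.prodMk_right t)) (hgi.comp (Prod.mk_right_injective t))
  · exact (range_comp_subset_range _ _).trans ((range_comp_subset_range _ _).trans hfQ)

/-- Each `P m` is separable, so only countably many of the disjoint `K i` have nonempty
interior in it. -/
lemma Pairwise.exists_forall_interior_preimage_eq_empty {X ι : Type*} [TopologicalSpace X]
    [SecondCountableTopology X] [Uncountable ι] {K : ι → Set X} (hK : Pairwise (Disjoint on K))
    (P : ℕ → Set X) : ∃ i, ∀ m, interior ((↑) ⁻¹' K i : Set (P m)) = ∅ := by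
  by_contra! h
  have hcount : ∀ m, {i | (interior ((↑) ⁻¹' K i : Set (P m))).Nonempty}.Countable := fun m =>
    Set.PairwiseDisjoint.countable_of_nonempty_interior
      (fun i _ j _ hij => (hK hij).preimage _) fun _ hi => hi
  refine not_countable_univ ((countable_iUnion hcount).mono fun i _ => ?_)
  exact mem_iUnion.2 (h i)

lemma Perfect.exists_cantor_interior_preimage_eq_empty {X : Type*} [MetricSpace X]
    [CompleteSpace X] [SecondCountableTopology X] {Q : Set X} (hQ : Perfect Q) (hne : Q.Nonempty)
    (P : ℕ → Set X) :
    ∃ K, IsCantorSet K ∧ K ⊆ Q ∧ ∀ m, interior ((↑) ⁻¹' K : Set (P m)) = ∅ := by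
  obtain ⟨K, hKd, hK⟩ := hQ.exists_pairwise_disjoint_cantor hne
  obtain ⟨t, ht⟩ := hKd.exists_forall_interior_preimage_eq_empty P
  exact ⟨K t, (hK t).1, (hK t).2, ht⟩

lemma exists_cantor_subset_disjoint {X : Type*} [MetricSpace X] [CompleteSpace X]
    [SecondCountableTopology X] {P : ℕ → Set X} (hP : ∀ n, PerfectSet (P n)) {C : Set X}
    (hC : IsClosed C) (hCP : ∀ m, interior ((↑) ⁻¹' C : Set (P m)) = ∅) (n : ℕ) :
    ∃ K, IsCantorSet K ∧ K ⊆ P n ∧ Disjoint K C ∧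
      ∀ m, interior ((↑) ⁻¹' K : Set (P m)) = ∅ := by
  obtain ⟨x, hxP, hxC⟩ : ∃ x ∈ P n, x ∉ C := by
    by_contra! h
    obtain ⟨x, hx⟩ := (hP n).2
    have hcover : ((↑) ⁻¹' C : Set (P n)) = univ := eq_univ_of_forall fun y => h y y.2
    have := hCP n
    rw [hcover, interior_univ] at this
    exact eq_empty_iff_forall_notMem.1 this ⟨x, hx⟩ (mem_univ _)
  obtain ⟨Q, hQ, hQne, hQsub⟩ :=
    (hP n).1.exists_perfect_subset_inter_nhds hxP (hC.isOpen_compl.mem_nhds hxC)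
  obtain ⟨K, hK, hKQ, hKP⟩ := hQ.exists_cantor_interior_preimage_eq_empty hQne P
  exact ⟨K, hK, fun y hy => (hQsub (hKQ hy)).1,
    disjoint_left.2 fun y hy => (hQsub (hKQ hy)).2, hKP⟩

lemma exists_pairwise_disjoint_of_forall_exists_disjoint {α : Type*} {p : Set α → Prop}
    {q : ℕ → Set α → Prop} (h0 : p ∅)
    (h : ∀ C n, p C → ∃ K, q n K ∧ Disjoint K C ∧ p (C ∪ K)) :
    ∃ K : ℕ → Set α, Pairwise (Disjoint on K) ∧ ∀ n, q n (K n) := by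
  choose! F hF using h
  let C : ℕ → Set α := fun n => Nat.rec ∅ (fun n C => C ∪ F C n) n
  have hC : ∀ n, p (C n) := fun n => Nat.rec h0 (fun n ih => (hF _ n ih).2.2) n
  have hmono : Monotone C := monotone_nat_of_le_succ fun _ => subset_union_left
  refine ⟨fun n => F (C n) n, (pairwise_disjoint_on _).2 fun i j hij => ?_,
    fun n => (hF _ n (hC n)).1⟩
  exact (hF _ j (hC j)).2.1.symm.mono_left
    ((subset_union_right : F (C i) i ⊆ C (i + 1)).trans (hmono hij))

theorem stmt1_general {X : Type*} [TopologicalSpace X] [PolishSpace X]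
    (P : ℕ → Set X) (hP : ∀ n, PerfectSet (P n)) :
    ∃ K : ℕ → Set X, Pairwise (Function.onFun Disjoint K) ∧
      ∀ n, IsCantorSet (K n) ∧ K n ⊆ P n := by
  let := TopologicalSpace.upgradeIsCompletelyMetrizable X
  refine exists_pairwise_disjoint_of_forall_exists_disjoint
    (p := fun C => IsClosed C ∧ ∀ m, interior ((↑) ⁻¹' C : Set (P m)) = ∅)
    (q := fun n K => IsCantorSet K ∧ K ⊆ P n)
    ⟨isClosed_empty, fun m => by simp⟩ fun C n ⟨hC, hCP⟩ => ?_
  obtain ⟨K, hK, hKP, hKC, hKint⟩ := exists_cantor_subset_disjoint hP hC hCP n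
  refine ⟨K, ⟨hK, hKP⟩, hKC, hC.union hK.isCompact.isClosed, fun m => ?_⟩
  rw [preimage_union, interior_union_isClosed_of_interior_empty
    (hC.preimage continuous_subtype_val) (hKint m), hCP m]

theorem stmt1 {X : Type*} [TopologicalSpace X] [PolishSpace X]
    (hX : Perfect (Set.univ : Set X)) (P : ℕ → Set X) (hP : ∀ n, PerfectSet (P n)) :
    ∃ K : ℕ → Set X, Pairwise (Function.onFun Disjoint K) ∧
      ∀ n, IsCantorSet (K n) ∧ K n ⊆ P n :=
  stmt1_general P hP
end

section
/- The collection PM_σ of countably perfectly meager subsets of a perfect Polish space X is a σ-ideal: it contains all singletons, is closed under taking subsets, and is closed under countable unions. -/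
open Set

theorem Preperfect.perfectSpace {X : Type*} [TopologicalSpace X] {C : Set X}
    (hC : Preperfect C) : PerfectSpace C :=
  perfectSpace_iff_forall_not_isolated.mpr fun x => nhds_ne_subtype_neBot_iff.mpr (hC x x.2)

theorem Set.Subsingleton.isMeagre {X : Type*} [TopologicalSpace X] [T1Space X] [PerfectSpace X]
    {s : Set X} (hs : s.Subsingleton) : IsMeagre s := by
  obtain rfl | ⟨x, rfl⟩ := hs.eq_empty_or_singleton
  · exact IsMeagre.empty
  · exact residual_of_dense_open isOpen_compl_singleton (dense_compl_singleton x)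

theorem meagerIn_singleton {X : Type*} [TopologicalSpace X] [T1Space X] {P : Set X}
    (hP : Preperfect P) (x : X) : MeagerIn {x} P :=
  haveI := hP.perfectSpace
  (Set.subsingleton_singleton.preimage Subtype.val_injective).isMeagre

theorem MeagerIn.iUnion {X ι : Type*} [TopologicalSpace X] [Countable ι] {F : ι → Set X}
    {P : Set X} (hF : ∀ i, MeagerIn (F i) P) : MeagerIn (⋃ i, F i) P := by
  rw [MeagerIn, preimage_iUnion]
  exact isMeagre_iUnion hF

theorem IsClosed.isFsigma {X : Type*} [TopologicalSpace X] {F : Set X} (hF : IsClosed F) :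
    IsFsigma F :=
  ⟨fun _ => F, fun _ => hF, (iUnion_const F).symm⟩

theorem IsFsigma.iUnion {X : Type*} [TopologicalSpace X] {F : ℕ → Set X}
    (hF : ∀ n, IsFsigma (F n)) : IsFsigma (⋃ n, F n) := by
  choose s hs hFs using hF
  refine ⟨fun m => s m.unpair.1 m.unpair.2, fun m => hs _ _, ?_⟩
  simp only [iUnion_unpair, hFs]

section CPM

variable {X : Type*} [TopologicalSpace X]

theorem CPM.singleton [T1Space X] (x : X) : CPM {x} := fun _ hP =>
  ⟨{x}, isClosed_singleton.isFsigma, subset_rfl, fun n => meagerIn_singleton (hP n).1.acc x⟩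

theorem CPM.mono {A B : Set X} (hAB : A ⊆ B) (hB : CPM B) : CPM A := fun P hP =>
  let ⟨F, hF, hBF, hFP⟩ := hB P hP
  ⟨F, hF, hAB.trans hBF, hFP⟩

theorem CPM.iUnion {A : ℕ → Set X} (hA : ∀ n, CPM (A n)) : CPM (⋃ n, A n) := fun P hP => by
  choose F hF hAF hFP using fun n => hA n P hP
  exact ⟨⋃ n, F n, IsFsigma.iUnion hF, iUnion_mono hAF, fun k => MeagerIn.iUnion (hFP · k)⟩

end CPM

theorem stmt5_general {X : Type*} [TopologicalSpace X] [PolishSpace X] :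
    (∀ x : X, CPM {x}) ∧
    (∀ A B : Set X, A ⊆ B → CPM B → CPM A) ∧
    (∀ A : ℕ → Set X, (∀ n, CPM (A n)) → CPM (⋃ n, A n)) :=
  ⟨CPM.singleton, fun _ _ => CPM.mono, fun _ => CPM.iUnion⟩

theorem stmt5 {X : Type*} [TopologicalSpace X] [PolishSpace X]
    (hX : Perfect (Set.univ : Set X)) :
    (∀ x : X, CPM {x}) ∧
    (∀ A B : Set X, A ⊆ B → CPM B → CPM A) ∧
    (∀ A : ℕ → Set X, (∀ n, CPM (A n)) → CPM (⋃ n, A n)) :=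
  stmt5_general
end
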